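/- arXiv:2510.15481 — 4 statements merged into one kernel-verified Lean document; each statement's English description precedes it below -/
import Mathlib

section
/- Let λ ∈ ℂ. Assume there is a bounded linear operator E : Y → X such that for every v ∈ Y one has E v ∈ D and ∂(E v) = v, and assume that the map x ↦ λ x − A₀ x from D₀ to X is bijective, with (linear) inverse R_λ : X → D₀. Then for every v ∈ Y the element w := E v − R_λ(λ (E v) − A (E v)) belongs to D and satisfies A w = λ w and ∂ w = v. -/
/-- Solvability of the stationary boundary value problem `A w = λ w`, `∂ w = v`
via the representation `K(λ) = [I − (λI − A₀)⁻¹(λI − A)]E`. -/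
theorem stmt0
    {X Y : Type*} [NormedAddCommGroup X] [NormedSpace ℂ X] [CompleteSpace X]
    [NormedAddCommGroup Y] [NormedSpace ℂ Y] [CompleteSpace Y]
    (D : Submodule ℂ X) (A : D →ₗ[ℂ] X) (bd : D →ₗ[ℂ] Y)
    (lam : ℂ) (E : Y →L[ℂ] X)
    (hE : ∀ v : Y, E v ∈ D)
    (hbdE : ∀ v : Y, bd ⟨E v, hE v⟩ = v)
    -- `R` is the (linear) inverse of `x ↦ λ x − A₀ x : D₀ → X`:
    (R : X →ₗ[ℂ] D)
    (hR0 : ∀ x : X, bd (R x) = 0)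
    (hRright : ∀ x : X, lam • ((R x : X)) - A (R x) = x)
    (hRleft : ∀ d : D, bd d = 0 → R (lam • (d : X) - A d) = d) :
    ∀ v : Y, ∃ hw : E v - ((R (lam • E v - A ⟨E v, hE v⟩) : D) : X) ∈ D,
      A ⟨E v - ((R (lam • E v - A ⟨E v, hE v⟩) : D) : X), hw⟩
        = lam • (E v - ((R (lam • E v - A ⟨E v, hE v⟩) : D) : X)) ∧
      bd ⟨E v - ((R (lam • E v - A ⟨E v, hE v⟩) : D) : X), hw⟩ = v := by
  intro v
  set e : D := ⟨E v, hE v⟩ with he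
  set r : D := R (lam • E v - A e) with hr
  have hw : E v - (r : X) ∈ D := sub_mem (hE v) r.2
  have hkey : (⟨E v - (r : X), hw⟩ : D) = e - r := rfl
  refine ⟨hw, ?_, ?_⟩
  · rw [hkey, map_sub]
    have h1 := hRright (lam • E v - A e)
    have : (A r : X) = lam • (r : X) - (lam • E v - A e) := by
      rw [← h1, ← hr]; abel
    rw [this]
    push_cast [Submodule.coe_sub]
    module
  · rw [hkey, map_sub, hbdE v, hr, hR0, sub_zero]
end

section
/- Let λ ∈ ℂ and let K : Y → X be a bounded linear operator such that for all v ∈ Y: K v ∈ D, ∂(K v) = v, and A(K v) = λ (K v). Let w₀ ∈ X, f : [0,∞) → X, and let g : [0,∞) → Y be differentiable. Suppose u : [0,∞) → X is differentiable with u(t) ∈ D₀ for all t ≥ 0, u′(t) = A u(t) + λ K g(t) + f(t) − K g′(t) for all t ≥ 0, and u(0) = w₀ − K g(0). Then w(t) := u(t) + K g(t) is differentiable, takes values in D, and satisfies w′(t) = A w(t) + f(t), ∂ w(t) = g(t) for all t ≥ 0, and w(0) = w₀. -/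
/-- Reconstruction of the solution of the IBVP from the solution of the
homogeneous-boundary IVP: `w := u + K g` solves `w′ = A w + f`, `∂ w = g`,
`w(0) = w₀`. -/
theorem stmt4
    {X Y : Type*} [NormedAddCommGroup X] [NormedSpace ℂ X] [CompleteSpace X]
    [NormedAddCommGroup Y] [NormedSpace ℂ Y] [CompleteSpace Y]
    (D : Submodule ℂ X) (A : D →ₗ[ℂ] X) (bd : D →ₗ[ℂ] Y)
    (lam : ℂ) (K : Y →L[ℂ] X)
    (hK : ∀ v : Y, K v ∈ D)
    (hKbd : ∀ v : Y, bd ⟨K v, hK v⟩ = v)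
    (hKA : ∀ v : Y, A ⟨K v, hK v⟩ = lam • K v)
    (w₀ : X) (f : ℝ → X) (g g' : ℝ → Y)
    (hg' : ∀ t : ℝ, 0 ≤ t → HasDerivWithinAt g (g' t) (Set.Ici 0) t)
    (u : ℝ → X)
    (huD : ∀ t : ℝ, 0 ≤ t → ∃ hu : u t ∈ D, bd ⟨u t, hu⟩ = 0)
    (hu' : ∀ t : ℝ, (ht : 0 ≤ t) →
      HasDerivWithinAt u
        (A ⟨u t, (huD t ht).choose⟩ + lam • K (g t) + f t - K (g' t))
        (Set.Ici 0) t)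
    (hu0 : u 0 = w₀ - K (g 0)) :
    (∀ t : ℝ, (ht : 0 ≤ t) →
      ∃ hw : u t + K (g t) ∈ D,
        HasDerivWithinAt (fun s => u s + K (g s))
          (A ⟨u t + K (g t), hw⟩ + f t) (Set.Ici 0) t ∧
        bd ⟨u t + K (g t), hw⟩ = g t) ∧
    u 0 + K (g 0) = w₀ := by
  constructor
  · intro t ht
    have hu := (huD t ht).choose
    refine ⟨D.add_mem hu (hK (g t)), ?_, ?_⟩
    · have hsum : (⟨u t + K (g t), D.add_mem hu (hK (g t))⟩ : D)
          = ⟨u t, hu⟩ + ⟨K (g t), hK (g t)⟩ := rfl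
      have hd := (hu' t ht).add (((K.restrictScalars ℝ).hasFDerivAt.comp_hasDerivWithinAt t (hg' t ht) : HasDerivWithinAt (fun s => K (g s)) (K (g' t)) (Set.Ici 0) t))
      have : A ⟨u t + K (g t), D.add_mem hu (hK (g t))⟩ + f t
          = A ⟨u t, (huD t ht).choose⟩ + lam • K (g t) + f t - K (g' t) + K (g' t) := by
        rw [hsum, map_add, hKA]
        abel
      rw [this]
      exact hd
    · have hsum : (⟨u t + K (g t), D.add_mem hu (hK (g t))⟩ : D)
          = ⟨u t, hu⟩ + ⟨K (g t), hK (g t)⟩ := rfl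
      rw [hsum, map_add, (huD t ht).choose_spec, hKbd, zero_add]
  · rw [hu0]; abel
end

section
/- Let Z be a complex Banach space, q ≥ 1, τ > 0, c ∈ ℝ^q, γ ∈ ℂ^q and R₀,…,R_{q−1} ∈ ℂ such that Σ_{i=1}^q γ_i c_i^j = j! R_j for 0 ≤ j ≤ q−1. Then for every function h : ℝ → Z of class C^q whose q-th derivative is bounded, ‖ Σ_{i=1}^q γ_i h(τ c_i) − Σ_{j=0}^{q−1} R_j τ^j h^{(j)}(0) ‖ ≤ ( Σ_{i=1}^q |γ_i| |c_i|^q / q! ) · τ^q · sup_{s ∈ ℝ} ‖h^{(q)}(s)‖. -/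
/-!
The moment conditions say that the quadrature `Σ_i γ_i u(τ c_i)` reproduces
`Σ_j R_j τ^j u^{(j)}(0)` on polynomials `u` of degree `< q`; applied to the Taylor polynomial of
`h` at `0`, the error becomes `Σ_i γ_i r(τ c_i)` with `r` the Taylor remainder. The sharp bound
`‖r(x)‖ ≤ M |x|^q / q!` follows by induction on `q`: the remainder of `h` has the remainder of
`h'` as derivative, and a function vanishing at `x₀` whose derivative is bounded by
`M |y - x₀|^n / n!` is bounded by `M |x - x₀|^(n+1) / (n+1)!` (comparison with the boundary
function, on each side of `x₀`).
-/

open Finset Set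
open scoped Nat

section DerivativeBound

variable {F : Type*} [NormedAddCommGroup F] [NormedSpace ℝ F]
  {g g' : ℝ → F} {x₀ M : ℝ} {n : ℕ}

lemma norm_le_of_norm_deriv_le_pow_of_le (hg : ∀ y, HasDerivAt g (g' y) y) (hg₀ : g x₀ = 0)
    (hg' : ∀ y, ‖g' y‖ ≤ M * |y - x₀| ^ n / n !) {x : ℝ} (hx : x₀ ≤ x) :
    ‖g x‖ ≤ M * |x - x₀| ^ (n + 1) / (n + 1)! := by
  have hB : ∀ y, HasDerivAt (fun y ↦ M * (y - x₀) ^ (n + 1) / (n + 1)!)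
      (M * (y - x₀) ^ n / n !) y := fun y ↦ by
    refine ((((hasDerivAt_id' y).sub_const x₀).pow (n + 1)).const_mul M |>.div_const
      ((n + 1)! : ℝ)).congr_deriv ?_
    rw [Nat.add_sub_cancel, Nat.factorial_succ]
    push_cast
    field_simp
  have := image_norm_le_of_norm_deriv_right_le_deriv_boundary
    (fun y _ ↦ (hg y).continuousAt.continuousWithinAt) (fun y _ ↦ (hg y).hasDerivWithinAt)
    (by simp [hg₀]) hB (fun y hy ↦ by simpa [abs_of_nonneg (sub_nonneg.2 hy.1)] using hg' y)
    (right_mem_Icc.2 hx)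
  rwa [abs_of_nonneg (sub_nonneg.2 hx)]

lemma norm_le_of_norm_deriv_le_pow (hg : ∀ y, HasDerivAt g (g' y) y) (hg₀ : g x₀ = 0)
    (hg' : ∀ y, ‖g' y‖ ≤ M * |y - x₀| ^ n / n !) (x : ℝ) :
    ‖g x‖ ≤ M * |x - x₀| ^ (n + 1) / (n + 1)! := by
  rcases le_total x₀ x with hx | hx
  · exact norm_le_of_norm_deriv_le_pow_of_le hg hg₀ hg' hx
  · have hreflect : ∀ y, HasDerivAt (fun y ↦ g (-y)) (-g' (-y)) y := fun y ↦ by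
      simpa [Function.comp_def] using (hg (-y)).scomp y (hasDerivAt_neg y)
    have := norm_le_of_norm_deriv_le_pow_of_le hreflect (by simpa using hg₀)
      (fun y ↦ by simpa [abs_sub_comm, add_comm] using hg' (-y)) (neg_le_neg hx)
    simpa [abs_sub_comm, neg_add_eq_sub] using this

end DerivativeBound

section Taylor

variable {F : Type*} [NormedAddCommGroup F] [NormedSpace ℝ F]

/-- Unlike `taylor_mean_remainder_bound`, this has the sharp constant `1 / (n + 1)!`. -/
theorem norm_sub_taylorWithinEval_univ_le {f : ℝ → F} {M : ℝ} {n : ℕ}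
    (hf : ContDiff ℝ (n + 1) f) (hM : ∀ y, ‖iteratedDeriv (n + 1) f y‖ ≤ M) (x₀ x : ℝ) :
    ‖f x - taylorWithinEval f n univ x₀ x‖ ≤ M * |x - x₀| ^ (n + 1) / (n + 1)! := by
  induction n generalizing f x with
  | zero =>
    simp only [taylor_within_zero_eval]
    refine norm_le_of_norm_deriv_le_pow (g := fun y ↦ f y - f x₀) (g' := deriv f)
      (fun y ↦ ((hf.differentiable (by simp) y).hasDerivAt).sub_const _) (sub_self _)
      (fun y ↦ by simpa using hM y) x
  | succ n ih =>
    obtain ⟨hf_diff, -, hf'⟩ := contDiff_succ_iff_deriv.mp hf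
    refine norm_le_of_norm_deriv_le_pow
      (g' := fun y ↦ deriv f y - taylorWithinEval (deriv f) n univ x₀ y)
      (fun y ↦ (hf_diff y).hasDerivAt.sub ?_) (by simp)
      (fun y ↦ ih (mod_cast hf') (fun y ↦ by simpa [← iteratedDeriv_succ'] using hM y) y) x
    simpa [derivWithin_univ] using
      hasDerivAt_taylorWithinEval_succ (x := y) (s := univ) (x₀ := x₀) f n

theorem norm_sub_sum_range_iteratedDeriv_le {f : ℝ → F} {M : ℝ} {n : ℕ}
    (hf : ContDiff ℝ n f) (hM : ∀ y, ‖iteratedDeriv n f y‖ ≤ M) (x₀ x : ℝ) :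
    ‖f x - ∑ j ∈ range n, ((j ! : ℝ)⁻¹ * (x - x₀) ^ j) • iteratedDeriv j f x₀‖
      ≤ M * |x - x₀| ^ n / n ! := by
  cases n with
  | zero => simpa using hM x
  | succ n =>
    simpa [taylor_within_apply, iteratedDerivWithin_univ] using
      norm_sub_taylorWithinEval_univ_le (mod_cast hf) hM x₀ x

end Taylor

theorem sum_smul_eq_sum_smul_sum_of_moments {𝕜 V : Type*} [Field 𝕜] [CharZero 𝕜]
    [AddCommGroup V] [Module 𝕜 V] {q : ℕ} {c γ R : Fin q → 𝕜}
    (hγ : ∀ j : Fin q, ∑ i, γ i * c i ^ (j : ℕ) = ((j : ℕ)! : 𝕜) * R j)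
    (τ : 𝕜) (v : Fin q → V) :
    ∑ j, (R j * τ ^ (j : ℕ)) • v j
      = ∑ i, γ i • ∑ j : Fin q, (((j : ℕ)! : 𝕜)⁻¹ * (τ * c i) ^ (j : ℕ)) • v j := by
  simp only [smul_sum, smul_smul]
  rw [sum_comm]
  refine sum_congr rfl fun j _ ↦ ?_
  rw [← sum_smul]
  congr 1
  calc R j * τ ^ (j : ℕ) = ((j : ℕ)! : 𝕜)⁻¹ * τ ^ (j : ℕ) * ∑ i, γ i * c i ^ (j : ℕ) := by
        have : ((j : ℕ)! : 𝕜) ≠ 0 := Nat.cast_ne_zero.2 (Nat.factorial_ne_zero _)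
        rw [hγ j]; field_simp
    _ = _ := by rw [mul_sum]; exact sum_congr rfl fun i _ ↦ by ring

theorem stmt16_general
    {Z : Type*} [NormedAddCommGroup Z] [NormedSpace ℂ Z]
    (q : ℕ) (τ : ℝ) (hτ : 0 < τ)
    (c : Fin q → ℝ) (γ : Fin q → ℂ) (R : Fin q → ℂ)
    (hγ : ∀ j : Fin q, ∑ i, γ i * (c i : ℂ) ^ (j : ℕ)
      = ((j : ℕ).factorial : ℂ) * R j)
    (h : ℝ → Z) (hh : ContDiff ℝ q h)
    (hbd : ∃ C : ℝ, ∀ s : ℝ, ‖iteratedDeriv q h s‖ ≤ C) :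
    ‖(∑ i, γ i • h (τ * c i))
        - ∑ j : Fin q, (R j * (τ : ℂ) ^ (j : ℕ)) • iteratedDeriv (j : ℕ) h 0‖
      ≤ (∑ i, ‖γ i‖ * |c i| ^ q / q.factorial) * τ ^ q
          * ⨆ s : ℝ, ‖iteratedDeriv q h s‖ := by
  set M := ⨆ s : ℝ, ‖iteratedDeriv q h s‖
  obtain ⟨C, hC⟩ := hbd
  have hM : ∀ s, ‖iteratedDeriv q h s‖ ≤ M := le_ciSup ⟨C, forall_mem_range.2 hC⟩
  set T : ℝ → Z := fun x ↦ ∑ j ∈ range q, ((j ! : ℝ)⁻¹ * x ^ j) • iteratedDeriv j h 0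
  have hquad : ∑ j : Fin q, (R j * (τ : ℂ) ^ (j : ℕ)) • iteratedDeriv (j : ℕ) h 0
      = ∑ i, γ i • T (τ * c i) := by
    rw [sum_smul_eq_sum_smul_sum_of_moments (c := fun i ↦ (c i : ℂ)) hγ]
    refine sum_congr rfl fun i _ ↦ congrArg _ ?_
    simp only [T, ← Complex.coe_smul]
    push_cast
    exact Fin.sum_univ_eq_sum_range
      (fun j ↦ ((j ! : ℂ)⁻¹ * (τ * c i) ^ j) • iteratedDeriv j h 0) q
  rw [hquad, ← sum_sub_distrib]
  calc _ ≤ ∑ i, ‖γ i‖ * ‖h (τ * c i) - T (τ * c i)‖ := by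
        simp only [← smul_sub]
        exact (norm_sum_le _ _).trans (sum_le_sum fun i _ ↦ norm_smul_le _ _)
    _ ≤ ∑ i, ‖γ i‖ * (M * |τ * c i| ^ q / q !) := by
        gcongr with i
        simpa using norm_sub_sum_range_iteratedDeriv_le hh hM 0 (τ * c i)
    _ = _ := by
        simp only [abs_mul, abs_of_pos hτ, mul_pow, sum_mul]
        exact sum_congr rfl fun i _ ↦ by ring

/-- Taylor quadrature estimate: if the weights `γ` reproduce the moments
`Σ_i γ_i c_i^j = j! R_j` for `0 ≤ j ≤ q−1`, then for every `C^q` function `h`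
with bounded `q`-th derivative,
`‖Σ_i γ_i h(τc_i) − Σ_j R_j τ^j h^{(j)}(0)‖ ≤ (Σ_i |γ_i||c_i|^q/q!) τ^q sup ‖h^{(q)}‖`. -/
theorem stmt16
    {Z : Type*} [NormedAddCommGroup Z] [NormedSpace ℂ Z]
    (q : ℕ) (hq : 1 ≤ q) (τ : ℝ) (hτ : 0 < τ)
    (c : Fin q → ℝ) (γ : Fin q → ℂ) (R : Fin q → ℂ)
    (hγ : ∀ j : Fin q, ∑ i, γ i * (c i : ℂ) ^ (j : ℕ)
      = ((j : ℕ).factorial : ℂ) * R j)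
    (h : ℝ → Z) (hh : ContDiff ℝ q h)
    (hbd : ∃ C : ℝ, ∀ s : ℝ, ‖iteratedDeriv q h s‖ ≤ C) :
    ‖(∑ i, γ i • h (τ * c i))
        - ∑ j : Fin q, (R j * (τ : ℂ) ^ (j : ℕ)) • iteratedDeriv (j : ℕ) h 0‖
      ≤ (∑ i, ‖γ i‖ * |c i| ^ q / q.factorial) * τ ^ q
          * ⨆ s : ℝ, ‖iteratedDeriv q h s‖ :=
  stmt16_general q τ hτ c γ R hγ h hh hbd
end

section
/- Let Z be a complex Banach space, w ∈ ℂ with Re(w) > 0, τ > 0, q ≥ 1, and let h : [0,∞) → Z be of class C^q with h^{(q)} bounded. Define φ(t) := (τw)^{−1} ∫_0^∞ exp(−s/(τw)) h(t+s) ds. Then for every t ≥ 0, ‖ φ(t) − Σ_{j=0}^{q−1} (τ w)^j h^{(j)}(t) ‖ ≤ τ^q · |w|^{2q+1} / (Re w)^{q+1} · sup_{s ≥ 0} ‖h^{(q)}(s)‖. -/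
/-!
Put `c = (τw)⁻¹`, so that `φ t = c ∫₀^∞ e^{-cs} h(t+s) ds` with `Re c > 0`. Integration by parts
gives `c ∫₀^∞ e^{-cs} g(s) ds = g(0) + ∫₀^∞ e^{-cs} g'(s) ds`; applied `q` times to `g = h(t + ·)`
it yields `φ t = ∑_{j<q} (τw)^j h^{(j)}(t) + (τw)^q c ∫₀^∞ e^{-cs} h^{(q)}(t+s) ds`.
The remainder is at most `(τ|w|)^q (|c| / Re c) M = τ^q |w|^{q+1} M / Re w`, where
`M = sup ‖h^{(q)}‖`, and this is below the claimed bound because `Re w ≤ |w|`.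
The boundary terms at infinity vanish since a bounded `h^{(q)}` makes every lower derivative
grow at most polynomially on `[0, ∞)`.
-/

open MeasureTheory Set Filter

theorem integrableOn_one_add_pow_mul_exp_neg {a : ℝ} (ha : 0 < a) (k : ℕ) :
    IntegrableOn (fun s : ℝ => (1 + s) ^ k * Real.exp (-(a * s))) (Ioi 0) := by
  have hmonomial (i : ℕ) : IntegrableOn (fun s : ℝ => s ^ i * Real.exp (-(a * s))) (Ioi 0) := by
    simpa [Real.rpow_natCast, neg_mul] using
      integrableOn_rpow_mul_exp_neg_mul_rpow (s := i) (p := 1)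
        (by linarith [i.cast_nonneg (α := ℝ)]) zero_lt_one ha
  have hbinom : (fun s : ℝ => (1 + s) ^ k * Real.exp (-(a * s))) = fun s =>
      ∑ i ∈ Finset.range (k + 1), (k.choose i : ℝ) * (s ^ i * Real.exp (-(a * s))) := by
    funext s
    rw [add_comm, add_pow, Finset.sum_mul]
    exact Finset.sum_congr rfl fun i _ => by ring
  rw [hbinom]
  exact integrable_finsetSum _ fun i _ => (hmonomial i).const_mul _

theorem Complex.norm_inv_div_inv_re (z : ℂ) : ‖z⁻¹‖ / z⁻¹.re = ‖z‖ / z.re := by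
  rcases eq_or_ne z 0 with rfl | hz
  · simp
  rw [norm_inv, Complex.inv_re, Complex.normSq_eq_norm_sq]
  field_simp

theorem Complex.norm_cexp_neg_mul_smul {E : Type*} [NormedAddCommGroup E] [NormedSpace ℂ E]
    (c : ℂ) (s : ℝ) (x : E) :
    ‖Complex.exp (-(c * s)) • x‖ = Real.exp (-(c.re * s)) * ‖x‖ := by
  simp [norm_smul, Complex.norm_exp]

def HasPolynomialGrowthOnIci {E : Type*} [Norm E] (g : ℝ → E) : Prop :=
  ∃ B : ℝ, ∃ k : ℕ, ∀ x, 0 ≤ x → ‖g x‖ ≤ B * (1 + x) ^ k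

section PolynomialGrowth

variable {E : Type*} [NormedAddCommGroup E] [NormedSpace ℝ E]

theorem HasPolynomialGrowthOnIci.of_deriv {g : ℝ → E} (hg : Differentiable ℝ g)
    (hg' : HasPolynomialGrowthOnIci (deriv g)) : HasPolynomialGrowthOnIci g := by
  obtain ⟨B, k, hB⟩ := hg'
  have hB0 : 0 ≤ B := (norm_nonneg _).trans (by simpa using hB 0 le_rfl)
  refine ⟨‖g 0‖ + B, k + 1, fun x hx => ?_⟩
  have hmvt : ‖g x - g 0‖ ≤ B * (1 + x) ^ k * (x - 0) :=
    norm_image_sub_le_of_norm_deriv_le_segment' (fun y _ => (hg y).hasDerivAt.hasDerivWithinAt)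
      (fun y hy => (hB y hy.1).trans (by gcongr <;> linarith [hy.1, hy.2])) x ⟨hx, le_rfl⟩
  have hpow : (1 : ℝ) ≤ (1 + x) ^ (k + 1) := one_le_pow₀ (by linarith)
  have hBpow : 0 ≤ B * (1 + x) ^ k := by positivity
  calc ‖g x‖ ≤ ‖g 0‖ + B * (1 + x) ^ k * x := by linarith [norm_le_insert' (g x) (g 0)]
    _ ≤ ‖g 0‖ * (1 + x) ^ (k + 1) + B * (1 + x) ^ k * (1 + x) := by
        gcongr
        · exact le_mul_of_one_le_right (norm_nonneg _) hpow
        · linarith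
    _ = (‖g 0‖ + B) * (1 + x) ^ (k + 1) := by ring

theorem HasPolynomialGrowthOnIci.of_iteratedDeriv {n : ℕ} {g : ℝ → E} (hg : ContDiff ℝ n g)
    (hgn : HasPolynomialGrowthOnIci (iteratedDeriv n g)) : HasPolynomialGrowthOnIci g := by
  induction n generalizing g with
  | zero => simpa using hgn
  | succ n ih =>
    obtain ⟨hdiff, -, hderiv⟩ := (contDiff_succ_iff_deriv (n := n)).mp (by exact_mod_cast hg)
    exact .of_deriv hdiff (ih hderiv (by rwa [← iteratedDeriv_succ']))

end PolynomialGrowth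

section Laplace

variable {Z : Type*} [NormedAddCommGroup Z] [NormedSpace ℂ Z]

noncomputable def laplaceTransform (c : ℂ) (g : ℝ → Z) : Z :=
  ∫ s in Ioi (0 : ℝ), Complex.exp (-(c * s)) • g s

theorem HasPolynomialGrowthOnIci.integrableOn_cexp_smul {g : ℝ → Z}
    (hg : HasPolynomialGrowthOnIci g) (hgc : Continuous g) {c : ℂ} (hc : 0 < c.re) :
    IntegrableOn (fun s : ℝ => Complex.exp (-(c * s)) • g s) (Ioi 0) := by
  obtain ⟨B, k, hB⟩ := hg
  refine ((integrableOn_one_add_pow_mul_exp_neg hc k).const_mul B).mono'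
    (by fun_prop : Continuous _).aestronglyMeasurable ?_
  filter_upwards [ae_restrict_mem measurableSet_Ioi] with s hs
  rw [Complex.norm_cexp_neg_mul_smul]
  calc Real.exp (-(c.re * s)) * ‖g s‖ ≤ Real.exp (-(c.re * s)) * (B * (1 + s) ^ k) := by
        gcongr; exact hB s hs.le
    _ = B * ((1 + s) ^ k * Real.exp (-(c.re * s))) := by ring

theorem norm_laplaceTransform_le {g : ℝ → Z} {M : ℝ} (hM : ∀ s, 0 ≤ s → ‖g s‖ ≤ M) {c : ℂ}
    (hc : 0 < c.re) : ‖laplaceTransform c g‖ ≤ M / c.re := by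
  have hint : IntegrableOn (fun s : ℝ => M * Real.exp (-c.re * s)) (Ioi 0) :=
    (exp_neg_integrableOn_Ioi 0 hc).const_mul M
  refine (norm_integral_le_of_norm_le hint ?_).trans_eq ?_
  · filter_upwards [ae_restrict_mem measurableSet_Ioi] with s hs
    rw [Complex.norm_cexp_neg_mul_smul, neg_mul, mul_comm M]
    gcongr
    exact hM s hs.le
  · rw [integral_const_mul, integral_exp_mul_Ioi (by linarith) 0]
    field_simp
    simp

variable [CompleteSpace Z]

theorem smul_laplaceTransform_eq {g : ℝ → Z} (hg : Differentiable ℝ g)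
    (hg' : Continuous (deriv g)) (hgp : HasPolynomialGrowthOnIci g)
    (hgp' : HasPolynomialGrowthOnIci (deriv g)) {c : ℂ} (hc : 0 < c.re) :
    c • laplaceTransform c g = g 0 + laplaceTransform c (deriv g) := by
  set F : ℝ → Z := fun s => Complex.exp (-(c * s)) • g s
  have hF (x : ℝ) :
      HasDerivAt F (Complex.exp (-(c * x)) • deriv g x - c • F x) x := by
    have hexp : HasDerivAt (fun s : ℝ => Complex.exp (-(c * s)))
        (Complex.exp (-(c * x)) * -c) x := by
      simpa using ((Complex.ofRealCLM.hasDerivAt (x := x)).const_mul c).neg.cexp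
    refine (hexp.smul (hg x).hasDerivAt).congr_deriv ?_
    simp only [F, smul_smul]
    module
  have hFint : IntegrableOn F (Ioi 0) := hgp.integrableOn_cexp_smul hg.continuous hc
  have hcFint : IntegrableOn (fun s => c • F s) (Ioi 0) := hFint.smul c
  have hF'int := (hgp'.integrableOn_cexp_smul hg' hc).sub hcFint
  have hftc := integral_Ioi_of_hasDerivAt_of_tendsto' (fun x _ => hF x) hF'int
    (tendsto_zero_of_hasDerivAt_of_integrableOn_Ioi (fun x _ => hF x) hF'int hFint)
  rw [integral_sub (hgp'.integrableOn_cexp_smul hg' hc) hcFint, integral_smul] at hftc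
  simp only [F, Complex.ofReal_zero, mul_zero, neg_zero, Complex.exp_zero, one_smul] at hftc
  unfold laplaceTransform
  linear_combination (norm := module) -hftc

theorem smul_laplaceTransform_eq_sum_add {n : ℕ} {g : ℝ → Z} (hg : ContDiff ℝ n g)
    (hgn : HasPolynomialGrowthOnIci (iteratedDeriv n g)) {c : ℂ} (hc : 0 < c.re) :
    c • laplaceTransform c g = ∑ j ∈ Finset.range n, c⁻¹ ^ j • iteratedDeriv j g 0
      + c⁻¹ ^ n • (c • laplaceTransform c (iteratedDeriv n g)) := by
  induction n generalizing g with
  | zero => simp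
  | succ n ih =>
    obtain ⟨hdiff, -, hderiv⟩ := (contDiff_succ_iff_deriv (n := n)).mp (by exact_mod_cast hg)
    have hgn' : HasPolynomialGrowthOnIci (iteratedDeriv n (deriv g)) := by
      rwa [← iteratedDeriv_succ']
    have hc0 : c ≠ 0 := by rintro rfl; simp at hc
    rw [smul_laplaceTransform_eq hdiff hderiv.continuous (hgn.of_iteratedDeriv hg)
      (hgn'.of_iteratedDeriv hderiv) hc, ← inv_smul_smul₀ hc0 (laplaceTransform c (deriv g)),
      ih hderiv hgn', Finset.sum_range_succ', iteratedDeriv_succ']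
    simp only [iteratedDeriv_succ', smul_add, Finset.smul_sum, smul_smul, pow_succ', mul_assoc,
      pow_zero, one_smul, iteratedDeriv_zero]
    abel

end Laplace

theorem norm_ofReal_mul_pow_mul_div_re_le {τ : ℝ} (hτ : 0 < τ) {w : ℂ} (hw : 0 < w.re) (q : ℕ) :
    ‖(τ : ℂ) * w‖ ^ q * (‖(τ : ℂ) * w‖ / ((τ : ℂ) * w).re)
      ≤ τ ^ q * ‖w‖ ^ (2 * q + 1) / w.re ^ (q + 1) := by
  have hr : 1 ≤ ‖w‖ / w.re := (one_le_div hw).mpr (Complex.re_le_norm w)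
  rw [norm_mul, Complex.norm_real, Real.norm_of_nonneg hτ.le, Complex.re_ofReal_mul,
    mul_div_mul_left _ _ hτ.ne']
  calc (τ * ‖w‖) ^ q * (‖w‖ / w.re)
      ≤ (τ * ‖w‖) ^ q * (‖w‖ / w.re) * (‖w‖ / w.re) ^ q :=
        le_mul_of_one_le_right (by positivity) (one_le_pow₀ hr)
    _ = τ ^ q * ‖w‖ ^ (2 * q + 1) / w.re ^ (q + 1) := by
        rw [div_pow]
        field_simp
        ring

theorem stmt18_general
    {Z : Type*} [NormedAddCommGroup Z] [NormedSpace ℂ Z] [CompleteSpace Z]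
    (w : ℂ) (hw : 0 < w.re) (τ : ℝ) (hτ : 0 < τ) (q : ℕ)
    (h : ℝ → Z) (hh : ContDiff ℝ q h)
    (hbd : ∃ C : ℝ, ∀ s : ℝ, 0 ≤ s → ‖iteratedDeriv q h s‖ ≤ C) :
    letI φ : ℝ → Z := fun t =>
      ((τ : ℂ) * w)⁻¹ • ∫ s in Set.Ioi (0 : ℝ),
        Complex.exp (-(s : ℂ) / ((τ : ℂ) * w)) • h (t + s)
    ∀ t : ℝ, 0 ≤ t →
      ‖φ t - ∑ j : Fin q, (((τ : ℂ) * w) ^ (j : ℕ)) • iteratedDeriv (j : ℕ) h t‖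
        ≤ τ ^ q * ‖w‖ ^ (2 * q + 1) / w.re ^ (q + 1)
            * ⨆ s : Set.Ici (0 : ℝ), ‖iteratedDeriv q h s‖ := by
  intro t ht
  beta_reduce
  set z : ℂ := (τ : ℂ) * w
  set M := ⨆ s : Set.Ici (0 : ℝ), ‖iteratedDeriv q h s‖
  have hM (s : ℝ) (hs : 0 ≤ s) : ‖iteratedDeriv q h s‖ ≤ M := by
    obtain ⟨C, hC⟩ := hbd
    exact le_ciSup (f := fun s : Set.Ici (0 : ℝ) => ‖iteratedDeriv q h s‖)
      ⟨C, by rintro _ ⟨s, rfl⟩; exact hC s s.2⟩ ⟨s, hs⟩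
  have hc : 0 < z⁻¹.re := by
    have hz : 0 < z.re := by simpa [z] using mul_pos hτ hw
    rw [Complex.inv_re]
    exact div_pos hz (Complex.normSq_pos.mpr fun h0 => by simp [h0] at hz)
  have hgq (s : ℝ) (hs : 0 ≤ s) : ‖iteratedDeriv q h (t + s)‖ ≤ M := hM _ (by positivity)
  have hg : ContDiff ℝ q fun s => h (t + s) := hh.comp (by fun_prop)
  have htaylor := smul_laplaceTransform_eq_sum_add hg
    ⟨M, 0, by simpa [iteratedDeriv_comp_const_add] using hgq⟩ hc
  simp only [iteratedDeriv_comp_const_add, inv_inv, add_zero] at htaylor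
  have hφ : ∫ s in Ioi (0 : ℝ), Complex.exp (-(s : ℂ) / z) • h (t + s)
      = laplaceTransform z⁻¹ (fun s => h (t + s)) := by
    simp only [laplaceTransform, div_eq_inv_mul, mul_neg]
  rw [hφ, htaylor, Fin.sum_univ_eq_sum_range (fun j => z ^ j • iteratedDeriv j h t),
    add_sub_cancel_left, norm_smul, norm_smul, norm_pow]
  calc ‖z‖ ^ q * (‖z⁻¹‖ * ‖laplaceTransform z⁻¹ fun s => iteratedDeriv q h (t + s)‖)
      ≤ ‖z‖ ^ q * (‖z⁻¹‖ * (M / z⁻¹.re)) := by gcongr; exact norm_laplaceTransform_le hgq hc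
    _ = ‖z‖ ^ q * (‖z‖ / z.re) * M := by rw [← Complex.norm_inv_div_inv_re]; ring
    _ ≤ τ ^ q * ‖w‖ ^ (2 * q + 1) / w.re ^ (q + 1) * M := by
        gcongr
        · exact (norm_nonneg _).trans (hM 0 le_rfl)
        · exact norm_ofReal_mul_pow_mul_div_re_le hτ hw q

/-- Order-`q` Taylor expansion of the resolvent of the translation semigroup:
for `φ(t) = (τw)⁻¹ ∫_0^∞ e^{−s/(τw)} h(t+s) ds`,
`‖φ(t) − Σ_{j<q} (τw)^j h^{(j)}(t)‖ ≤ τ^q |w|^{2q+1}/(Re w)^{q+1} sup_{s≥0} ‖h^{(q)}(s)‖`. -/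
theorem stmt18
    {Z : Type*} [NormedAddCommGroup Z] [NormedSpace ℂ Z] [CompleteSpace Z]
    (w : ℂ) (hw : 0 < w.re) (τ : ℝ) (hτ : 0 < τ) (q : ℕ) (hq : 1 ≤ q)
    (h : ℝ → Z) (hh : ContDiff ℝ q h)
    (hbd : ∃ C : ℝ, ∀ s : ℝ, 0 ≤ s → ‖iteratedDeriv q h s‖ ≤ C) :
    letI φ : ℝ → Z := fun t =>
      ((τ : ℂ) * w)⁻¹ • ∫ s in Set.Ioi (0 : ℝ),
        Complex.exp (-(s : ℂ) / ((τ : ℂ) * w)) • h (t + s)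
    ∀ t : ℝ, 0 ≤ t →
      ‖φ t - ∑ j : Fin q, (((τ : ℂ) * w) ^ (j : ℕ)) • iteratedDeriv (j : ℕ) h t‖
        ≤ τ ^ q * ‖w‖ ^ (2 * q + 1) / w.re ^ (q + 1)
            * ⨆ s : Set.Ici (0 : ℝ), ‖iteratedDeriv q h s‖ :=
  stmt18_general w hw τ hτ q h hh hbd
end
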